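/- arXiv:1311.4001 — 3 statements merged into one kernel-verified Lean document; each statement's English description precedes it below -/
import Mathlib

section
/- Let Π = (S, F, *) be a maximization problem and let M be its slack matrix, defined by M(f,s) = f* − f(s) for f ∈ F and s ∈ S. Then xc(Π) ≤ rank₊(M), i.e., from any rank-r nonnegative factorization of M one obtains an LP formulation of Π with at most r inequality constraints. -/
attribute [local instance] Classical.propDecidable

open Matrix Filter

noncomputable section

/-- The nonnegative rank of a real matrix: the least `r` such that `M = T * U`
with `T`, `U` entrywise nonnegative. -/
def nnegRank {m n : Type*} (M : Matrix m n ℝ) : ℕ :=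
  sInf { r : ℕ | ∃ (T : Matrix m (Fin r) ℝ) (U : Matrix (Fin r) n ℝ),
    (∀ i j, 0 ≤ T i j) ∧ (∀ i j, 0 ≤ U i j) ∧ M = T * U }

/-- An LP formulation of size `r` of the maximization problem with feasible solutions `S`,
objective functions indexed by `F` (given by `obj`), and approximation guarantees `guar`:
a system of `r` linear inequalities and `k` linear equations in `ℝ^d`, realizations `x s` of
feasible solutions (satisfying the system), realizations `w f` of objective functions
(`⟪w f, x s⟫ = obj f s`), such that the LP value is at most the guarantee. -/
def IsLPFormulation {S F : Type*} (obj : F → S → ℝ) (guar : F → ℝ) (r : ℕ) : Prop :=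
  ∃ (d k : ℕ) (Ai : Matrix (Fin r) (Fin d) ℝ) (bi : Fin r → ℝ)
    (Ae : Matrix (Fin k) (Fin d) ℝ) (be : Fin k → ℝ)
    (x : S → Fin d → ℝ) (w : F → Fin d → ℝ),
    (∀ s, (∀ i, Ai.mulVec (x s) i ≤ bi i) ∧ Ae.mulVec (x s) = be) ∧
    (∀ f s, w f ⬝ᵥ x s = obj f s) ∧
    (∀ f (y : Fin d → ℝ), (∀ i, Ai.mulVec y i ≤ bi i) → Ae.mulVec y = be →
      w f ⬝ᵥ y ≤ guar f)

/-- Formulation complexity: minimum size of an LP formulation. -/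
def xcLP {S F : Type*} (obj : F → S → ℝ) (guar : F → ℝ) : ℕ :=
  sInf { r | IsLPFormulation obj guar r }

/-- A stable (independent) set in a graph. -/
def IsStableSet {V : Type*} (G : SimpleGraph V) (s : Finset V) : Prop :=
  ∀ u ∈ s, ∀ v ∈ s, ¬ G.Adj u v

/-- The stability number of a graph. -/
def stabNum {V : Type*} [Fintype V] (G : SimpleGraph V) : ℕ :=
  sSup { k | ∃ s : Finset V, IsStableSet G s ∧ s.card = k }

/-- The formulation complexity of the maximum stable set problem `STAB(G)`:
feasible solutions are the stable sets of `G`, objective functions are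
`f_a(S) = |S ∩ a|` for `a ⊆ V(G)`, guarantees are `α(G[a])`. -/
def xcSTAB {V : Type*} [Fintype V] (G : SimpleGraph V) : ℕ :=
  xcLP (fun (a : Finset V) (s : {s : Finset V // IsStableSet G s}) => ((s.val ∩ a).card : ℝ))
       (fun a : Finset V => (stabNum (G.induce (↑a : Set V)) : ℝ))

/-- Probability of an event under the Erdős–Rényi distribution `G(n,p)`. -/
def erProb (n : ℕ) (p : ℝ) (E : SimpleGraph (Fin n) → Prop) : ℝ :=
  ∑ G : SimpleGraph (Fin n),
    if E G then p ^ Nat.card G.edgeSet * (1 - p) ^ (n.choose 2 - Nat.card G.edgeSet) else 0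

/-- The smaller endpoint of an unordered pair. -/
def sym2Min {α : Type*} [LinearOrder α] (e : Sym2 α) : α :=
  Sym2.lift ⟨fun a b => min a b, fun a b => min_comm a b⟩ e

/-- The larger endpoint of an unordered pair. -/
def sym2Max {α : Type*} [LinearOrder α] (e : Sym2 α) : α :=
  Sym2.lift ⟨fun a b => max a b, fun a b => max_comm a b⟩ e

/-- Adjacency of the gadget subdivision `T^g` with parameter `ℓ`: every edge `ij` of `T`
is replaced by a path with `2ℓ+3` edges between `i` and `j`, whose `2ℓ+2` internal vertices
are new and pairwise distinct across edges. -/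
def gadgetAdj {α : Type*} [LinearOrder α] (T : SimpleGraph α) (ℓ : ℕ) :
    (α ⊕ (↥T.edgeSet × Fin (2*ℓ+2))) → (α ⊕ (↥T.edgeSet × Fin (2*ℓ+2))) → Prop
  | Sum.inl _, Sum.inl _ => False
  | Sum.inl u, Sum.inr ek =>
      (ek.2.val = 0 ∧ u = sym2Min ek.1.val) ∨ (ek.2.val = 2*ℓ+1 ∧ u = sym2Max ek.1.val)
  | Sum.inr ek, Sum.inl u =>
      (ek.2.val = 0 ∧ u = sym2Min ek.1.val) ∨ (ek.2.val = 2*ℓ+1 ∧ u = sym2Max ek.1.val)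
  | Sum.inr ek, Sum.inr ek' =>
      ek.1 = ek'.1 ∧ (ek.2.val + 1 = ek'.2.val ∨ ek'.2.val + 1 = ek.2.val)

/-- The gadget subdivision `T^g` of a graph `T` with parameter `ℓ`. -/
def gadget {α : Type*} [LinearOrder α] (T : SimpleGraph α) (ℓ : ℕ) :
    SimpleGraph (α ⊕ (↥T.edgeSet × Fin (2*ℓ+2))) where
  Adj := gadgetAdj T ℓ
  symm := by
    constructor
    rintro (u | ek) (v | ek') h
    · exact h.elim
    · exact h
    · exact h
    · exact ⟨h.1.symm, h.2.symm⟩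
  loopless := by
    constructor
    rintro (u | ek) h
    · exact h.elim
    · exact h.2.elim (fun h' => by omega) (fun h' => by omega)

/-- A simple graph with vertex set contained in `[n] = {1, …, n}` (modelled as `Fin n`):
a pair of a simple graph on `Fin n` and its vertex set, containing all endpoints of edges. -/
def GraphOn (n : ℕ) : Type :=
  { GV : SimpleGraph (Fin n) × Finset (Fin n) //
      ∀ u v, GV.1.Adj u v → u ∈ GV.2 ∧ v ∈ GV.2 }

instance (n : ℕ) : Fintype (GraphOn n) :=
  Subtype.fintype _

/-- The stability number of a graph with vertex set `⊆ [n]`: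
stable sets must consist of vertices of the graph. -/
def alphaOn {n : ℕ} (G : GraphOn n) : ℕ :=
  sSup { k | ∃ s : Finset (Fin n), s ⊆ G.val.2 ∧ IsStableSet G.val.1 s ∧ s.card = k }

/-- Probability of an event for a random family of graphs, where each graph with vertex
set `⊆ [n]` is included in the family independently with probability `p`. -/
def famProb (n : ℕ) (p : ℝ) (E : Finset (GraphOn n) → Prop) : ℝ :=
  ∑ 𝒢 : Finset (GraphOn n),
    if E 𝒢 then p ^ 𝒢.card * (1 - p) ^ (Fintype.card (GraphOn n) - 𝒢.card) else 0

end

/-!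
A nonnegative factorization `guar f - obj f s = ∑ i, T f i * U i s` is itself an LP formulation:
realize `s` by the column `U · s` (together with a constant coordinate `1`) and `f` by
`guar f - ⟪T f, ·⟫`; the only inequalities needed are the `r` nonnegativity constraints, and on
that orthant `guar f - ⟪T f, y⟫ ≤ guar f` because `T ≥ 0`. Nonnegativity of the slack makes the
trivial factorization through the columns available, so `rank₊` is attained.
-/

open Matrix

theorem exists_nonneg_factorization_card {m n : Type*} [Fintype n] (M : Matrix m n ℝ)
    (hM : ∀ i j, 0 ≤ M i j) :
    ∃ (T : Matrix m (Fin (Fintype.card n)) ℝ) (U : Matrix (Fin (Fintype.card n)) n ℝ),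
      (∀ i j, 0 ≤ T i j) ∧ (∀ i j, 0 ≤ U i j) ∧ M = T * U := by
  let e := (Fintype.equivFin n).symm
  refine ⟨M.submatrix id e, (1 : Matrix n n ℝ).submatrix e id, fun i j => hM i (e j),
    fun i j => ?_, ?_⟩
  · by_cases h : e i = j <;> simp [one_apply, h]
  · rw [submatrix_mul_equiv, submatrix_id_id, Matrix.mul_one]

theorem exists_nonneg_factorization_nnegRank {m n : Type*} [Fintype n] (M : Matrix m n ℝ)
    (hM : ∀ i j, 0 ≤ M i j) :
    ∃ (T : Matrix m (Fin (nnegRank M)) ℝ) (U : Matrix (Fin (nnegRank M)) n ℝ),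
      (∀ i j, 0 ≤ T i j) ∧ (∀ i j, 0 ≤ U i j) ∧ M = T * U := by
  have hne : {r : ℕ | ∃ (T : Matrix m (Fin r) ℝ) (U : Matrix (Fin r) n ℝ),
      (∀ i j, 0 ≤ T i j) ∧ (∀ i j, 0 ≤ U i j) ∧ M = T * U}.Nonempty :=
    ⟨_, exists_nonneg_factorization_card M hM⟩
  exact Nat.sInf_mem hne

theorem isLPFormulation_of_nonneg_factorization {S F : Type*} (obj : F → S → ℝ)
    (guar : F → ℝ) {r : ℕ} (T : Matrix F (Fin r) ℝ) (U : Matrix (Fin r) S ℝ)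
    (hT : ∀ f i, 0 ≤ T f i) (hU : ∀ i s, 0 ≤ U i s)
    (hTU : of (fun f s => guar f - obj f s) = T * U) :
    IsLPFormulation obj guar r := by
  -- coordinate `0` carries the constant `1`; the constraints say `y 0 = 1` and `Fin.tail y ≥ 0`
  refine ⟨r + 1, 1, of fun i => -Pi.single i.succ 1, 0, of fun _ => Pi.single 0 1, 1,
    fun s => vecCons 1 (fun i => U i s), fun f => vecCons (guar f) (-T f), ?_, ?_, ?_⟩
  · intro s
    refine ⟨fun i => ?_, funext fun _ => ?_⟩
    · simpa only [mulVec, of_apply, neg_dotProduct, single_dotProduct, one_mul, cons_val_succ,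
        Pi.zero_apply, neg_nonpos] using hU i s
    · simp only [mulVec, of_apply, single_dotProduct, one_mul, cons_val_zero, Pi.one_apply]
  · intro f s
    have hfs : guar f - obj f s = T f ⬝ᵥ fun i => U i s := congrFun (congrFun hTU f) s
    rw [cons_dotProduct_cons, neg_dotProduct]
    linarith
  · intro f y hineq heq
    have hy0 : y 0 = 1 := by
      simpa only [mulVec, of_apply, single_dotProduct, one_mul, Pi.one_apply] using congrFun heq 0
    have hy : 0 ≤ Fin.tail y := fun i => show 0 ≤ y i.succ by
      simpa only [mulVec, of_apply, neg_dotProduct, single_dotProduct, one_mul,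
        Pi.zero_apply, neg_nonpos] using hineq i
    have hy_eq : y = vecCons 1 (Fin.tail y) := by rw [← hy0]; exact (Fin.cons_self_tail y).symm
    rw [hy_eq, cons_dotProduct_cons, neg_dotProduct]
    have hTy := dotProduct_nonneg_of_nonneg (hT f) hy
    linarith

theorem xc_le_slack_nnegRank_general {S F : Type*} [Fintype S]
    (obj : F → S → ℝ) (guar : F → ℝ) (h : ∀ f s, obj f s ≤ guar f) :
    xcLP obj guar ≤ nnegRank (Matrix.of fun f s => guar f - obj f s) := by
  obtain ⟨T, U, hT, hU, hTU⟩ :=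
    exists_nonneg_factorization_nnegRank _ fun f s => sub_nonneg.mpr (h f s)
  exact Nat.sInf_le (isLPFormulation_of_nonneg_factorization obj guar T U hT hU hTU)

/-- For a maximization problem `Π = (S, F, *)` with slack matrix
`M(f,s) = f* − f(s)`, one has `xc(Π) ≤ rank₊(M)`. -/
theorem xc_le_slack_nnegRank {S F : Type*} [Fintype S] [Fintype F] [Nonempty S]
    (obj : F → S → ℝ) (guar : F → ℝ) (h : ∀ f s, obj f s ≤ guar f) :
    xcLP obj guar ≤ nnegRank (Matrix.of fun f s => guar f - obj f s) :=
  xc_le_slack_nnegRank_general obj guar h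
end

section
/- Let T be a finite simple graph and ℓ ≥ 0 an even integer, and let T^g denote the gadget subdivision of T with parameter ℓ. Then every nonempty induced subgraph of T^g has average degree at most 2 + 1/(ℓ+1). In particular, for ℓ = 0 every nonempty induced subgraph of T^g has average degree at most 3. -/
attribute [local instance] Classical.propDecidable

open Matrix Filter

/-!
Every edge of `T^g` lies on the path replacing some edge of `T`, and distinct paths share
only endpoints in `V(T)`. On one path with `n = 2ℓ+2` internal vertices, a vertex set spans at
most as many path edges as it contains internal vertices, unless it contains all of them, when
it spans at most `n + 1`. Summing over the paths, an induced subgraph on `s` has at most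
`(n+1)/n · |s|` edges, i.e. average degree at most `2 + 1/(ℓ+1)`.
-/

open Finset

theorem card_consecutive_le_of_not {p : ℕ → Prop} [DecidablePred p] {n m : ℕ}
    (hm₀ : 0 < m) (hmn : m ≤ n) (hpm : ¬ p m) :
    #{t ∈ range (n + 1) | p t ∧ p (t + 1)} ≤ #{k ∈ range n | p (k + 1)} := by
  -- a missing vertex `m` kills the two edges at `m`; every other edge goes to its endpoint
  -- nearer to `m`
  refine card_le_card_of_injOn (fun t => if t < m then t else t - 1) ?_ ?_
  · intro t ht
    rw [mem_coe, mem_filter, mem_range] at ht ⊢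
    have hne : t ≠ m := fun h => hpm (h ▸ ht.2.1)
    have hne' : t + 1 ≠ m := fun h => hpm (h ▸ ht.2.2)
    dsimp only
    split_ifs with h
    · exact ⟨by omega, ht.2.2⟩
    · exact ⟨by omega, by rw [Nat.sub_add_cancel (by omega)]; exact ht.2.1⟩
  · intro t ht t' ht' h
    rw [mem_coe, mem_filter, mem_range] at ht ht'
    have hne : t ≠ m := fun h => hpm (h ▸ ht.2.1)
    have hne' : t + 1 ≠ m := fun h => hpm (h ▸ ht.2.2)
    have hne₂ : t' ≠ m := fun h => hpm (h ▸ ht'.2.1)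
    have hne₂' : t' + 1 ≠ m := fun h => hpm (h ▸ ht'.2.2)
    simp only at h
    split_ifs at h <;> omega

theorem mul_card_consecutive_le (p : ℕ → Prop) [DecidablePred p] (n : ℕ) :
    n * #{t ∈ range (n + 1) | p t ∧ p (t + 1)} ≤ (n + 1) * #{k ∈ range n | p (k + 1)} := by
  by_cases hall : ∀ k < n, p (k + 1)
  · have hI : #{k ∈ range n | p (k + 1)} = n := by
      rw [filter_true_of_mem fun k hk => hall k (mem_range.mp hk), card_range]
    have hA : #{t ∈ range (n + 1) | p t ∧ p (t + 1)} ≤ n + 1 :=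
      (card_filter_le _ _).trans (card_range _).le
    rw [hI, mul_comm (n + 1)]
    exact Nat.mul_le_mul_left n hA
  · push Not at hall
    obtain ⟨k, hk, hpk⟩ := hall
    exact Nat.mul_le_mul (Nat.le_succ n) (card_consecutive_le_of_not k.succ_pos hk hpk)

theorem SimpleGraph.mul_card_edgeSet_induce_le_of_pathCover {V ι : Type*} [Fintype ι]
    (G : SimpleGraph V) (n : ℕ) (path : ι → ℕ → V)
    (hcover : ∀ q ∈ G.edgeSet, ∃ i, ∃ t ≤ n, q = s(path i t, path i (t + 1)))
    (hinj : ∀ i j k k', k < n → k' < n → path i (k + 1) = path j (k' + 1) → i = j ∧ k = k')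
    (s : Finset V) :
    n * Nat.card (G.induce (s : Set V)).edgeSet ≤ (n + 1) * #s := by
  let pathEdges (i : ι) : Finset (Sym2 V) :=
    {t ∈ range (n + 1) | path i t ∈ s ∧ path i (t + 1) ∈ s}.image
      fun t => s(path i t, path i (t + 1))
  have hmem : ∀ q ∈ (G.induce (s : Set V)).edgeSet,
      Sym2.map Subtype.val q ∈ univ.biUnion pathEdges := by
    intro q hq
    induction q using Sym2.ind with
    | _ x y =>
      obtain ⟨i, t, ht, hxy⟩ := hcover s(x, y) (G.mem_edgeSet.2 ((G.induce _).mem_edgeSet.1 hq))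
      have hends : ∀ v ∈ s(path i t, path i (t + 1)), v ∈ s := by
        rw [← hxy]
        intro v hv
        rcases Sym2.mem_iff.1 hv with rfl | rfl
        exacts [x.2, y.2]
      refine mem_biUnion.2 ⟨i, mem_univ i, mem_image.2 ⟨t, ?_, hxy.symm⟩⟩
      exact mem_filter.2 ⟨mem_range.2 (by omega), hends _ (Sym2.mem_mk_left _ _),
        hends _ (Sym2.mem_mk_right _ _)⟩
  have hedges : Nat.card (G.induce (s : Set V)).edgeSet ≤ #(univ.biUnion pathEdges) := by
    rw [← Nat.card_eq_finsetCard]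
    exact Nat.card_le_card_of_injective (fun q => ⟨_, hmem q.1 q.2⟩)
      fun q q' h => Subtype.ext (Sym2.map.injective Subtype.val_injective (congrArg Subtype.val h))
  have hinterior : ∑ i, #{k ∈ range n | path i (k + 1) ∈ s} ≤ #s := by
    rw [← card_sigma]
    refine card_le_card_of_injOn (fun ik => path ik.1 (ik.2 + 1)) ?_ ?_
    · intro ik hik
      simp only [coe_sigma, Set.mem_sigma_iff, mem_coe, mem_filter] at hik
      exact hik.2.2
    · rintro ⟨i, k⟩ hik ⟨j, k'⟩ hjk' h
      simp only [coe_sigma, Set.mem_sigma_iff, mem_coe, mem_filter, mem_range] at hik hjk'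
      obtain ⟨rfl, rfl⟩ := hinj i j k k' hik.2.1 hjk'.2.1 h
      rfl
  calc n * Nat.card (G.induce (s : Set V)).edgeSet
      ≤ n * ∑ i, #(pathEdges i) := Nat.mul_le_mul_left n (hedges.trans card_biUnion_le)
    _ ≤ ∑ i, n * #{t ∈ range (n + 1) | path i t ∈ s ∧ path i (t + 1) ∈ s} := by
      rw [mul_sum]; exact sum_le_sum fun i _ => Nat.mul_le_mul_left n card_image_le
    _ ≤ ∑ i, (n + 1) * #{k ∈ range n | path i (k + 1) ∈ s} :=
      sum_le_sum fun i _ => mul_card_consecutive_le (path i · ∈ s) n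
    _ ≤ (n + 1) * #s := by rw [← mul_sum]; exact Nat.mul_le_mul_left _ hinterior

section Gadget

variable {α : Type*} [LinearOrder α] (T : SimpleGraph α) (ℓ : ℕ)

/-- The vertex at distance `p` from `sym2Min e` along the path of `T^g` replacing `e`;
`p = 2ℓ+3` is `sym2Max e`. -/
def gadgetPath (e : T.edgeSet) (p : ℕ) : α ⊕ (T.edgeSet × Fin (2*ℓ+2)) :=
  if p = 0 then .inl (sym2Min e.1)
  else if h : p ≤ 2*ℓ+2 then .inr (e, ⟨p - 1, by omega⟩)
  else .inl (sym2Max e.1)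

variable {T ℓ}

theorem gadgetPath_zero (e : T.edgeSet) : gadgetPath T ℓ e 0 = .inl (sym2Min e.1) := rfl

theorem gadgetPath_succ (e : T.edgeSet) (k : Fin (2*ℓ+2)) :
    gadgetPath T ℓ e (k + 1) = .inr (e, k) := by
  simp [gadgetPath, show (k : ℕ) ≤ 2*ℓ+1 by omega]

theorem gadgetPath_last (e : T.edgeSet) : gadgetPath T ℓ e (2*ℓ+3) = .inl (sym2Max e.1) := by
  simp [gadgetPath]

theorem gadgetPath_succ_injective {e e' : T.edgeSet} {k k' : ℕ} (hk : k < 2*ℓ+2)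
    (hk' : k' < 2*ℓ+2) (h : gadgetPath T ℓ e (k + 1) = gadgetPath T ℓ e' (k' + 1)) :
    e = e' ∧ k = k' := by
  rw [gadgetPath_succ e ⟨k, hk⟩, gadgetPath_succ e' ⟨k', hk'⟩] at h
  simp only [Sum.inr.injEq, Prod.mk.injEq, Fin.mk.injEq] at h
  exact h

theorem exists_gadgetPath_of_adj_inl_inr {u : α} {ek : T.edgeSet × Fin (2*ℓ+2)}
    (h : (gadget T ℓ).Adj (.inl u) (.inr ek)) :
    ∃ e, ∃ t ≤ 2*ℓ+2, s(.inl u, .inr ek) = s(gadgetPath T ℓ e t, gadgetPath T ℓ e (t + 1)) := by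
  obtain ⟨e, k⟩ := ek
  rcases h with ⟨hk, rfl⟩ | ⟨hk, rfl⟩
  · refine ⟨e, 0, by omega, ?_⟩
    rw [gadgetPath_zero, ← gadgetPath_succ e k, hk]
  · have hpen : gadgetPath T ℓ e (2*ℓ+2) = .inr (e, k) := by
      rw [← gadgetPath_succ]; congr 1; dsimp only at hk; omega
    exact ⟨e, 2*ℓ+2, le_rfl, by rw [gadgetPath_last, hpen, Sym2.eq_swap]⟩

theorem exists_gadgetPath_of_mem_edgeSet {q : Sym2 (α ⊕ (T.edgeSet × Fin (2*ℓ+2)))}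
    (hq : q ∈ (gadget T ℓ).edgeSet) :
    ∃ e, ∃ t ≤ 2*ℓ+2, q = s(gadgetPath T ℓ e t, gadgetPath T ℓ e (t + 1)) := by
  induction q using Sym2.ind with
  | _ x y =>
    rw [SimpleGraph.mem_edgeSet] at hq
    rcases x with u | ⟨e, k⟩ <;> rcases y with v | ⟨e', k'⟩
    · exact hq.elim
    · exact exists_gadgetPath_of_adj_inl_inr hq
    · rw [Sym2.eq_swap]
      exact exists_gadgetPath_of_adj_inl_inr hq.symm
    · obtain ⟨rfl, hkk' | hkk'⟩ := hq <;> dsimp only at hkk'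
      · refine ⟨e, k + 1, by omega, ?_⟩
        rw [gadgetPath_succ, show (k : ℕ) + 1 + 1 = k' + 1 by omega, gadgetPath_succ]
      · refine ⟨e, k' + 1, by omega, ?_⟩
        rw [gadgetPath_succ, show (k' : ℕ) + 1 + 1 = k + 1 by omega, gadgetPath_succ,
          Sym2.eq_swap]

end Gadget

theorem gadget_induced_avg_degree_le_general {α : Type*} [Fintype α] [LinearOrder α]
    (T : SimpleGraph α) (ℓ : ℕ)
    (s : Set (α ⊕ (↥T.edgeSet × Fin (2*ℓ+2)))) :
    2 * (Nat.card ((gadget T ℓ).induce s).edgeSet : ℝ) / (Nat.card s : ℝ)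
        ≤ 2 + 1 / ((ℓ : ℝ) + 1) ∧
    (ℓ = 0 →
      2 * (Nat.card ((gadget T ℓ).induce s).edgeSet : ℝ) / (Nat.card s : ℝ) ≤ 3) := by
  have hcount : (2*ℓ+2) * Nat.card ((gadget T ℓ).induce s).edgeSet ≤ (2*ℓ+3) * Nat.card s := by
    have := (gadget T ℓ).mul_card_edgeSet_induce_le_of_pathCover (2*ℓ+2) (gadgetPath T ℓ)
      (fun _ => exists_gadgetPath_of_mem_edgeSet) (fun _ _ _ _ => gadgetPath_succ_injective)
      s.toFinset
    rwa [Set.coe_toFinset, Set.toFinset_card, ← Nat.card_eq_fintype_card] at this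
  have hbound : 2 * (Nat.card ((gadget T ℓ).induce s).edgeSet : ℝ) / (Nat.card s : ℝ)
      ≤ 2 + 1 / ((ℓ : ℝ) + 1) := by
    refine div_le_of_le_mul₀ (by positivity) (by positivity) ?_
    rw [show 2 + 1 / ((ℓ : ℝ) + 1) = (2*ℓ+3) / (ℓ+1) by field_simp; ring, div_mul_eq_mul_div,
      le_div_iff₀ (by positivity)]
    have : ((2*ℓ+2 : ℕ) : ℝ) * Nat.card ((gadget T ℓ).induce s).edgeSet
        ≤ ((2*ℓ+3 : ℕ) : ℝ) * Nat.card s := by exact_mod_cast hcount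
    push_cast at this
    linarith
  refine ⟨hbound, fun hℓ => hbound.trans ?_⟩
  subst hℓ
  norm_num

/-- For a finite graph `T` and an even `ℓ ≥ 0`, every nonempty induced
subgraph of the gadget subdivision `T^g` has average degree at most `2 + 1/(ℓ+1)`;
in particular, for `ℓ = 0` the average degree is at most `3`. -/
theorem gadget_induced_avg_degree_le {α : Type*} [Fintype α] [LinearOrder α]
    (T : SimpleGraph α) (ℓ : ℕ) (hℓ : Even ℓ)
    (s : Set (α ⊕ (↥T.edgeSet × Fin (2*ℓ+2)))) (hs : s.Nonempty) :
    2 * (Nat.card ((gadget T ℓ).induce s).edgeSet : ℝ) / (Nat.card s : ℝ)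
        ≤ 2 + 1 / ((ℓ : ℝ) + 1) ∧
    (ℓ = 0 →
      2 * (Nat.card ((gadget T ℓ).induce s).edgeSet : ℝ) / (Nat.card s : ℝ) ≤ 3) :=
  gadget_induced_avg_degree_le_general T ℓ s
end

section
/- There exist constants c₁, c₂ > 0 and an integer n₀ such that for every n ≥ n₀ and every p with 0 < p ≤ 1/2, the Erdős–Rényi random graph G = G(n,p) satisfies P[ xc(STAB(G)) ≥ 2^{c₁·(ln n)²/p} ] ≤ n^{−c₂·(ln n)/p}. -/
attribute [local instance] Classical.propDecidable

open Matrix Filter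

/-!
The trivial LP formulation of `STAB(G)`, the simplex spanned by the characteristic vectors
of the stable sets, shows that `xc(STAB(G))` is at most the number of stable sets of `G`,
hence at most `n ^ k` when `G` has no stable set of size `k`. For `k ≈ 6 ln n / p` this is
below `2 ^ (20 (ln n)² / p)`, while by the union bound `G(n,p)` has a stable set of size `k`
with probability at most `C(n,k) (1-p)^C(k,2) ≤ n ^ (-12 ln n / p)`.
-/

open Finset SimpleGraph

theorem xcLP_le_card {S F : Type*} [Fintype S] {obj : F → S → ℝ} {guar : F → ℝ}
    (h : ∀ f s, obj f s ≤ guar f) : xcLP obj guar ≤ Fintype.card S := by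
  let e := Fintype.equivFin S
  -- `y ≥ 0, ∑ y = 1`: every LP value is a convex combination of objective values.
  refine Nat.sInf_le ⟨_, 1, -1, 0, Matrix.of fun _ _ => 1, fun _ => 1,
    fun s => Pi.single (e s) 1, fun f j => obj f (e.symm j), fun s => ⟨fun i => ?_, ?_⟩,
    fun f s => by simp [dotProduct_single], fun f y hy hsum => ?_⟩
  · by_cases hi : i = e s <;> simp [hi]
  · ext; simp [Matrix.mulVec, dotProduct]
  · have hy0 : ∀ j, 0 ≤ y j := fun j => by simpa [Matrix.neg_mulVec] using hy j
    have hy1 : ∑ j, y j = 1 := by simpa [Matrix.mulVec, dotProduct] using congrFun hsum 0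
    calc (fun j => obj f (e.symm j)) ⬝ᵥ y ≤ ∑ j, guar f * y j :=
          sum_le_sum fun j _ => mul_le_mul_of_nonneg_right (h f _) (hy0 j)
      _ = guar f := by rw [← mul_sum, hy1, mul_one]

theorem card_filter_card_lt_le_pow {α : Type*} [Fintype α] (hα : 2 ≤ Fintype.card α)
    (k : ℕ) : #{s : Finset α | s.card < k} ≤ Fintype.card α ^ k :=
  calc #{s : Finset α | s.card < k}
      ≤ #((range k).biUnion fun i => (univ : Finset α).powersetCard i) :=
        card_le_card fun s hs => by simpa using hs
    _ ≤ ∑ i ∈ range k, #((univ : Finset α).powersetCard i) := card_biUnion_le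
    _ ≤ ∑ i ∈ range k, Fintype.card α ^ i := sum_le_sum fun i _ => by
        simpa using Nat.choose_le_pow (Fintype.card α) i
    _ ≤ Fintype.card α ^ k := (Nat.geomSum_lt hα (by simp)).le

section StableSets

variable {V : Type*} {G : SimpleGraph V}

theorem IsStableSet.mono {s t : Finset V} (hs : IsStableSet G s) (h : t ⊆ s) :
    IsStableSet G t :=
  fun u hu v hv => hs u (h hu) v (h hv)

theorem IsStableSet.card_le_stabNum [Fintype V] {s : Finset V} (hs : IsStableSet G s) :
    s.card ≤ stabNum G :=
  le_csSup ⟨Fintype.card V, by rintro _ ⟨t, -, rfl⟩; exact card_le_univ t⟩ ⟨s, hs, rfl⟩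

theorem IsStableSet.card_inter_le_stabNum_induce {s : Finset V} (hs : IsStableSet G s)
    (a : Finset V) : (s ∩ a).card ≤ stabNum (G.induce (↑a : Set V)) := by
  have hstable : IsStableSet (G.induce (↑a : Set V)) (s.subtype (· ∈ (↑a : Set V))) :=
    fun u hu v hv => hs u (mem_subtype.1 hu) v (mem_subtype.1 hv)
  simpa [card_subtype, filter_mem_eq_inter] using hstable.card_le_stabNum

variable [Fintype V]

theorem xcSTAB_le_card_stableSets (G : SimpleGraph V) :
    xcSTAB G ≤ Fintype.card {s : Finset V // IsStableSet G s} :=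
  xcLP_le_card fun a s => by exact_mod_cast s.2.card_inter_le_stabNum_induce a

theorem xcSTAB_le_pow_of_forall_card_lt (hV : 2 ≤ Fintype.card V) {k : ℕ}
    (h : ∀ s, IsStableSet G s → s.card < k) : xcSTAB G ≤ Fintype.card V ^ k := by
  refine (xcSTAB_le_card_stableSets G).trans ?_
  rw [Fintype.card_subtype]
  exact (card_le_card (monotone_filter_right _ fun s _ => h s)).trans
    (card_filter_card_lt_le_pow hV k)

theorem exists_isStableSet_of_pow_lt_xcSTAB (hV : 2 ≤ Fintype.card V) {k : ℕ}
    (h : Fintype.card V ^ k < xcSTAB G) :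
    ∃ s ∈ (univ : Finset V).powersetCard k, IsStableSet G s := by
  contrapose! h
  refine xcSTAB_le_pow_of_forall_card_lt hV fun s hs => ?_
  by_contra! hks
  obtain ⟨t, hts, htk⟩ := exists_subset_card_eq hks
  exact h t (mem_powersetCard.2 ⟨subset_univ t, htk⟩) (hs.mono hts)

theorem isStableSet_iff_disjoint_edgeFinset [DecidableEq V] {s : Finset V} :
    IsStableSet G s ↔ Disjoint G.edgeFinset (s.offDiag.image Sym2.mk.uncurry) := by
  simp only [IsStableSet, Finset.disjoint_left, mem_edgeFinset, mem_image, mem_offDiag,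
    Prod.exists, Function.uncurry_apply_pair, not_exists, not_and]
  constructor
  · rintro h e he u v ⟨hu, hv, -⟩ rfl
    exact h u hu v hv he
  · intro h u hu v hv huv
    exact h huv u v ⟨hu, hv, huv.ne⟩ rfl

end StableSets

section ErdosRenyi

variable {n : ℕ} {p : ℝ}

theorem erProb_mono (hp0 : 0 ≤ p) (hp1 : p ≤ 1) {E E' : SimpleGraph (Fin n) → Prop}
    (h : ∀ G, E G → E' G) : erProb n p E ≤ erProb n p E' :=
  sum_le_sum fun G _ => by
    have := sub_nonneg.2 hp1
    by_cases hE : E G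
    · simp [hE, h G hE]
    · simp only [hE, if_false]; split_ifs <;> positivity

theorem erProb_exists_le_sum (hp0 : 0 ≤ p) (hp1 : p ≤ 1) {ι : Type*} (T : Finset ι)
    (E : ι → SimpleGraph (Fin n) → Prop) :
    erProb n p (fun G => ∃ i ∈ T, E i G) ≤ ∑ i ∈ T, erProb n p (E i) := by
  unfold erProb
  rw [sum_comm]
  refine sum_le_sum fun G _ => ?_
  have := sub_nonneg.2 hp1
  have hterm_nonneg : ∀ i ∈ T, (0 : ℝ) ≤
      if E i G then p ^ Nat.card G.edgeSet * (1 - p) ^ (n.choose 2 - Nat.card G.edgeSet)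
      else 0 := fun i _ => by split_ifs <;> positivity
  split_ifs with hG
  · obtain ⟨i, hi, hEi⟩ := hG
    simpa [hEi] using single_le_sum hterm_nonneg hi
  · exact sum_nonneg hterm_nonneg

theorem erProb_edgeFinset (P : Finset (Sym2 (Fin n)) → Prop) [DecidablePred P] :
    erProb n p (fun G => P G.edgeFinset) =
      ∑ s ∈ (⊤ : SimpleGraph (Fin n)).edgeFinset.powerset with P s,
        p ^ s.card * (1 - p) ^ (n.choose 2 - s.card) := by
  rw [sum_filter]
  refine sum_nbij' (fun G => G.edgeFinset) (fun s => fromEdgeSet s) ?_ ?_ ?_ ?_ ?_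
  · intro G _; simpa using edgeFinset_mono (le_top : G ≤ ⊤)
  · simp
  · intro G _; simp
  · intro s hs
    ext e
    simpa using fun he => not_isDiag_of_mem_edgeFinset (mem_powerset.1 hs he)
  · intro G _; simp [Nat.card_eq_fintype_card, edgeFinset_card]

theorem erProb_disjoint_edgeFinset {B : Finset (Sym2 (Fin n))}
    (hB : B ⊆ (⊤ : SimpleGraph (Fin n)).edgeFinset) :
    erProb n p (fun G => Disjoint G.edgeFinset B) = (1 - p) ^ B.card := by
  rw [erProb_edgeFinset (Disjoint · B)]
  set A := (⊤ : SimpleGraph (Fin n)).edgeFinset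
  have hA : A.card = n.choose 2 := by
    rw [card_edgeFinset_top_eq_card_choose_two, Fintype.card_fin]
  have hdisjoint : A.powerset.filter (Disjoint · B) = (A \ B).powerset := by
    ext s; simp [subset_sdiff]
  have hcard : A.card = B.card + (A \ B).card := by
    rw [card_sdiff_of_subset hB, Nat.add_sub_cancel' (card_le_card hB)]
  rw [hdisjoint, ← hA]
  -- the edges outside `B` are free and contribute `(p + (1 - p)) ^ #(A \ B) = 1`
  calc ∑ s ∈ (A \ B).powerset, p ^ s.card * (1 - p) ^ (A.card - s.card)
      = ∑ s ∈ (A \ B).powerset,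
          (1 - p) ^ B.card * (p ^ s.card * (1 - p) ^ ((A \ B).card - s.card)) :=
        sum_congr rfl fun s hs => by
          rw [hcard, Nat.add_sub_assoc (card_le_card (mem_powerset.1 hs)), pow_add]; ring
    _ = (1 - p) ^ B.card := by
        rw [← mul_sum, sum_pow_mul_eq_add_pow, add_sub_cancel, one_pow, mul_one]

theorem erProb_isStableSet (S : Finset (Fin n)) :
    erProb n p (fun G => IsStableSet G S) = (1 - p) ^ S.card.choose 2 := by
  simp_rw [isStableSet_iff_disjoint_edgeFinset]
  rw [erProb_disjoint_edgeFinset, Sym2.card_image_offDiag]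
  simp only [subset_iff, mem_image, mem_offDiag, edgeFinset_top, Set.mem_toFinset]
  rintro _ ⟨⟨u, v⟩, ⟨-, -, huv⟩, rfl⟩
  exact Sym2.mk_isDiag_iff.not.2 huv

end ErdosRenyi

theorem one_le_log_of_three_le {x : ℝ} (hx : 3 ≤ x) : 1 ≤ Real.log x := by
  rw [Real.le_log_iff_exp_le (by linarith)]
  linarith [Real.exp_one_lt_d9]

theorem pow_lt_two_rpow_of_le_add_two {x p : ℝ} (hx : 3 ≤ x) (hp0 : 0 < p) (hp1 : p ≤ 1)
    {k : ℕ} (hk : (k : ℝ) ≤ 6 * Real.log x / p + 2) :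
    x ^ k < 2 ^ (20 * Real.log x ^ 2 / p) := by
  have hL := one_le_log_of_three_le hx
  set L := Real.log x
  have hLp : L ≤ L ^ 2 / p := by rw [le_div_iff₀ hp0]; nlinarith
  have hkL : k * L ≤ 8 * (L ^ 2 / p) :=
    calc k * L ≤ (6 * L / p + 2) * L := by gcongr
      _ = 6 * (L ^ 2 / p) + 2 * L := by ring
      _ ≤ 8 * (L ^ 2 / p) := by linarith
  calc x ^ k = Real.exp (k * L) := by rw [Real.exp_nat_mul, Real.exp_log (by linarith)]
    _ < Real.exp (Real.log 2 * (20 * L ^ 2 / p)) := by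
        have hpos : 0 < L ^ 2 / p := by positivity
        rw [Real.exp_lt_exp, mul_div_assoc]; nlinarith [Real.log_two_gt_d9]
    _ = 2 ^ (20 * L ^ 2 / p) := (Real.rpow_def_of_pos two_pos _).symm

theorem pow_mul_one_sub_pow_choose_two_le_rpow {x p : ℝ} (hx : 1 ≤ x) (hp0 : 0 < p)
    (hp1 : p ≤ 1) {k : ℕ} (hk : 6 * Real.log x / p ≤ k - 1) :
    x ^ k * (1 - p) ^ k.choose 2 ≤ x ^ (-(12 * Real.log x / p)) := by
  have hL : 0 ≤ Real.log x := Real.log_nonneg hx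
  set L := Real.log x
  have h6 : 6 * L ≤ p * (k - 1) := by rw [div_le_iff₀ hp0] at hk; linarith
  have hbase : (1 - p) ^ k.choose 2 ≤ Real.exp (k.choose 2 * -p) := by
    rw [Real.exp_nat_mul]
    exact pow_le_pow_left₀ (sub_nonneg.2 hp1) (Real.one_sub_le_exp_neg p) _
  calc x ^ k * (1 - p) ^ k.choose 2 ≤ Real.exp (k * L) * Real.exp (k.choose 2 * -p) := by
        rw [Real.exp_nat_mul, Real.exp_log (by linarith)]; gcongr
    _ = Real.exp (k * (L - p * (k - 1) / 2)) := by
        rw [← Real.exp_add, Nat.cast_choose_two]; ring_nf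
    _ ≤ Real.exp (6 * L / p * (-2 * L)) :=
        Real.exp_le_exp.2 (by nlinarith [div_nonneg (by linarith : 0 ≤ 6 * L) hp0.le])
    _ = x ^ (-(12 * L / p)) := by
        rw [Real.rpow_def_of_pos (by linarith)]; congr 1; simp only [L]; ring

/-- There are `c₁, c₂ > 0` and `n₀` such that for every `n ≥ n₀` and
every `0 < p ≤ 1/2`,
`P[xc(STAB(G(n,p))) ≥ 2^{c₁·(ln n)²/p}] ≤ n^{−c₂·(ln n)/p}`. -/
theorem xcSTAB_whp_upper_bound :
    ∃ (c₁ c₂ : ℝ) (n₀ : ℕ), 0 < c₁ ∧ 0 < c₂ ∧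
      ∀ n : ℕ, n₀ ≤ n → ∀ p : ℝ, 0 < p → p ≤ 1/2 →
        erProb n p (fun G => (2 : ℝ) ^ (c₁ * Real.log n ^ 2 / p) ≤ (xcSTAB G : ℝ))
          ≤ (n : ℝ) ^ (-(c₂ * Real.log n / p)) := by
  refine ⟨20, 12, 3, by norm_num, by norm_num, fun n hn p hp0 hp12 => ?_⟩
  have hp1 : p ≤ 1 := by linarith
  have hn3 : (3 : ℝ) ≤ n := by exact_mod_cast hn
  set k := ⌈6 * Real.log n / p⌉₊ + 1
  have hk_lower : 6 * Real.log n / p ≤ k - 1 := by simp [k, Nat.le_ceil]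
  have hk_upper : (k : ℝ) ≤ 6 * Real.log n / p + 2 := by
    have := Nat.ceil_lt_add_one (by positivity : 0 ≤ 6 * Real.log n / p)
    push_cast [k]; linarith
  have hevent (G : SimpleGraph (Fin n)) (hG : 2 ^ (20 * Real.log n ^ 2 / p) ≤ (xcSTAB G : ℝ)) :
      ∃ S ∈ univ.powersetCard k, IsStableSet G S := by
    refine exists_isStableSet_of_pow_lt_xcSTAB (by rw [Fintype.card_fin]; omega) ?_
    rw [Fintype.card_fin]
    exact_mod_cast (pow_lt_two_rpow_of_le_add_two hn3 hp0 hp1 hk_upper).trans_le hG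
  calc erProb n p (fun G => 2 ^ (20 * Real.log n ^ 2 / p) ≤ (xcSTAB G : ℝ))
      ≤ erProb n p (fun G => ∃ S ∈ univ.powersetCard k, IsStableSet G S) :=
        erProb_mono hp0.le hp1 hevent
    _ ≤ ∑ S ∈ univ.powersetCard k, erProb n p (fun G => IsStableSet G S) :=
        erProb_exists_le_sum hp0.le hp1 _ _
    _ = n.choose k * (1 - p) ^ k.choose 2 := by
        rw [sum_congr rfl fun S hS => by rw [erProb_isStableSet, (mem_powersetCard.1 hS).2]]
        simp
    _ ≤ n ^ k * (1 - p) ^ k.choose 2 := by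
        gcongr
        exact_mod_cast Nat.choose_le_pow n k
    _ ≤ (n : ℝ) ^ (-(12 * Real.log n / p)) :=
        pow_mul_one_sub_pow_choose_two_le_rpow (by linarith) hp0 hp1 hk_lower
end
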